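/- In the quaternion algebra (7, -1)/ℚ, the lattice O = ℤ·1 + ℤ·(1/2 + i/2 + j/2 + k/2) + ℤ·j + ℤ·k is a ring (an order), and its reduced discriminant is 14. -/

import Mathlib

open scoped Quaternion

/-- The ℤ-lattice O = ℤ·1 + ℤ·(1/2 + i/2 + j/2 + k/2) + ℤ·j + ℤ·k in the quaternion
algebra (7,-1)/ℚ. -/
def quatOrder71 : Set ℍ[ℚ, 7, -1] :=
  {x | ∃ a b c d : ℤ,
    x = (a : ℚ) • (1 : ℍ[ℚ, 7, -1])
      + (b : ℚ) • (⟨1/2, 1/2, 1/2, 1/2⟩ : ℍ[ℚ, 7, -1])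
      + (c : ℚ) • (⟨0, 0, 1, 0⟩ : ℍ[ℚ, 7, -1])
      + (d : ℚ) • (⟨0, 0, 0, 1⟩ : ℍ[ℚ, 7, -1])}

/-- The reduced trace. -/
def trd71 (x : ℍ[ℚ, 7, -1]) : ℚ := 2 * x.re

/-- The reduced norm. -/
def nrd71 (x : ℍ[ℚ, 7, -1]) : ℚ := (x * star x).re

/-- The basis e₁ = 1, e₂ = (1+i+j+k)/2, e₃ = j, e₄ = k of O. -/
def basis71 : Fin 4 → ℍ[ℚ, 7, -1]
  | 0 => 1
  | 1 => ⟨1/2, 1/2, 1/2, 1/2⟩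
  | 2 => ⟨0, 0, 1, 0⟩
  | 3 => ⟨0, 0, 0, 1⟩

/-! Expanding a product in coordinates shows that `O` is a ring. The trace pairing
`(x, y) ↦ trd(x ȳ)` is `ℤ`-bilinear, so it is integral on `O` as soon as its Gram matrix on
`e₁, …, e₄` is; that Gram matrix has determinant `196 = 14²`. The trace is the case `y = 1`, and
integrality of the norm follows along the span from `nrd(x + y) = nrd x + nrd y + trd(x ȳ)`. -/

open Submodule

theorem Submodule.apply_mem_of_mem_span_range {R M N P ι κ : Type*} [CommSemiring R]
    [AddCommMonoid M] [AddCommMonoid N] [AddCommMonoid P] [Module R M] [Module R N] [Module R P]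
    (f : M →ₗ[R] N →ₗ[R] P) {v : ι → M} {w : κ → N} {Q : Submodule R P}
    (h : ∀ i j, f (v i) (w j) ∈ Q) {x : M} {y : N}
    (hx : x ∈ span R (Set.range v)) (hy : y ∈ span R (Set.range w)) : f x y ∈ Q := by
  refine map₂_le.1 ?_ x hx y hy
  rw [map₂_span_span, span_le]
  rintro _ ⟨_, ⟨i, rfl⟩, _, ⟨j, rfl⟩, rfl⟩
  exact h i j

theorem Submodule.mem_one_iff_exists_intCast {A : Type*} [Ring A] {x : A} :
    x ∈ (1 : Submodule ℤ A) ↔ ∃ n : ℤ, x = n := by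
  simp [mem_one, eq_comm]

namespace QuaternionAlgebra

variable {R : Type*} [CommRing R] {c₁ c₂ : R}

theorem re_add_mul_star_add (x y : ℍ[R, c₁, c₂]) :
    ((x + y) * star (x + y)).re = (x * star x).re + (y * star y).re + 2 * (x * star y).re := by
  simp only [re_mul, re_add, imI_add, imJ_add, imK_add, re_star, imI_star, imJ_star, imK_star]
  ring

theorem re_zsmul_mul_star_zsmul (n : ℤ) (x : ℍ[R, c₁, c₂]) :
    ((n • x) * star (n • x)).re = n ^ 2 * (x * star x).re := by
  rw [star_smul', smul_mul_smul_comm, ← pow_two, ← Int.cast_pow, ← zsmul_eq_mul]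
  exact map_zsmul (reₗ c₁ 0 c₂) _ _

end QuaternionAlgebra

open QuaternionAlgebra

theorem mem_quatOrder71_iff_mem_span {x : ℍ[ℚ, 7, -1]} :
    x ∈ quatOrder71 ↔ x ∈ span ℤ (Set.range basis71) := by
  simp only [mem_span_range_iff_exists_fun, Fin.sum_univ_four, basis71,
    ← Int.cast_smul_eq_zsmul ℚ]
  constructor
  · rintro ⟨a, b, c, d, rfl⟩
    exact ⟨![a, b, c, d], by simp⟩
  · rintro ⟨v, rfl⟩
    exact ⟨v 0, v 1, v 2, v 3, rfl⟩

theorem one_mem_quatOrder71 : (1 : ℍ[ℚ, 7, -1]) ∈ quatOrder71 :=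
  ⟨1, 0, 0, 0, by simp⟩

theorem mul_mem_quatOrder71 {x y : ℍ[ℚ, 7, -1]} (hx : x ∈ quatOrder71) (hy : y ∈ quatOrder71) :
    x * y ∈ quatOrder71 := by
  obtain ⟨a, b, c, d, rfl⟩ := hx
  obtain ⟨a', b', c', d', rfl⟩ := hy
  -- the coordinates of the product in the basis `e₁, …, e₄`
  refine ⟨a*a' + 3*b*b' - b'*c + 3*b*d' + 4*b'*d - c*c' + 7*d*d' - c*d' + c'*d,
    a*b' + a'*b + b*b' + b*d' + b'*c + 2*c*d' - 2*c'*d - b*c' - b'*d,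
    a*c' + b*c' + 3*b*d' + a'*c - 3*b'*d - c*d' + c'*d,
    a*d' + b*c' - b'*c + a'*d + b'*d - c*d' + c'*d, ?_⟩
  ext <;> simp [re_mul, imI_mul, imJ_mul, imK_mul] <;> ring

def gram71 : Matrix (Fin 4) (Fin 4) ℤ :=
  !![2, 1, 0, 0; 1, -6, 1, -7; 0, 1, 2, 0; 0, -7, 0, -14]

theorem trd71_basis71_mul_star (i j : Fin 4) :
    trd71 (basis71 i * star (basis71 j)) = gram71 i j := by
  fin_cases i <;> fin_cases j <;> simp [basis71, trd71, gram71] <;> norm_num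

theorem trd71_mul_star_mem_one {x y : ℍ[ℚ, 7, -1]} (hx : x ∈ quatOrder71)
    (hy : y ∈ quatOrder71) : trd71 (x * star y) ∈ (1 : Submodule ℤ ℚ) := by
  let trdForm : ℍ[ℚ, 7, -1] →ₗ[ℤ] ℍ[ℚ, 7, -1] →ₗ[ℤ] ℚ :=
    LinearMap.mk₂ ℤ (fun x y => trd71 (x * star y))
      (fun _ _ _ => by simp [trd71, add_mul, mul_add])
      (fun _ _ _ => by simp [trd71]; ring)
      (fun _ _ _ => by simp [trd71, mul_add])
      (fun _ _ _ => by simp [trd71]; ring)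
  refine apply_mem_of_mem_span_range trdForm (fun i j => ?_)
    (mem_quatOrder71_iff_mem_span.1 hx) (mem_quatOrder71_iff_mem_span.1 hy)
  exact mem_one_iff_exists_intCast.2 ⟨gram71 i j, trd71_basis71_mul_star i j⟩

theorem trd71_mem_one {x : ℍ[ℚ, 7, -1]} (hx : x ∈ quatOrder71) :
    trd71 x ∈ (1 : Submodule ℤ ℚ) := by
  simpa using trd71_mul_star_mem_one hx one_mem_quatOrder71

theorem det_trd71_basis71_mul_star :
    (Matrix.of fun i j : Fin 4 => trd71 (basis71 i * star (basis71 j))).det = 196 := by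
  have gram : (Matrix.of fun i j => trd71 (basis71 i * star (basis71 j))) =
      gram71.map Int.cast :=
    Matrix.ext trd71_basis71_mul_star
  rw [gram, ← Int.cast_det, show gram71.det = 196 by decide]
  norm_num

theorem nrd71_mem_one {x : ℍ[ℚ, 7, -1]} (hx : x ∈ quatOrder71) :
    nrd71 x ∈ (1 : Submodule ℤ ℚ) := by
  rw [mem_quatOrder71_iff_mem_span] at hx
  induction hx using span_induction with
  | mem _ h =>
    obtain ⟨i, rfl⟩ := h
    rw [mem_one_iff_exists_intCast]
    fin_cases i
    exacts [⟨1, by simp [nrd71, basis71]⟩, ⟨-3, by simp [nrd71, basis71]; norm_num⟩,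
      ⟨1, by simp [nrd71, basis71]⟩, ⟨-7, by simp [nrd71, basis71]⟩]
  | zero => simp [nrd71]
  | add x y hx hy hnx hny =>
    rw [nrd71, re_add_mul_star_add]
    exact add_mem (add_mem hnx hny) (trd71_mul_star_mem_one
      (mem_quatOrder71_iff_mem_span.2 hx) (mem_quatOrder71_iff_mem_span.2 hy))
  | smul n x _ hnx =>
    rw [nrd71, re_zsmul_mul_star_zsmul, ← Int.cast_pow, ← zsmul_eq_mul]
    exact zsmul_mem hnx _

/-- O = ℤ·1 + ℤ·(1+i+j+k)/2 + ℤ·j + ℤ·k is an order of (7,-1)/ℚ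
(a ring containing 1, with integral reduced traces and norms) whose reduced
discriminant is 14: det(trd(eᵢ·e̅ⱼ)) = 14² = 196. -/
theorem quatOrder71_is_order_of_discriminant_14 :
    (1 : ℍ[ℚ, 7, -1]) ∈ quatOrder71 ∧
    (∀ x ∈ quatOrder71, ∀ y ∈ quatOrder71, x * y ∈ quatOrder71) ∧
    (∀ x ∈ quatOrder71, ∃ n : ℤ, trd71 x = n) ∧
    (∀ x ∈ quatOrder71, ∃ n : ℤ, nrd71 x = n) ∧
    (Matrix.of fun i j : Fin 4 => trd71 (basis71 i * star (basis71 j))).det = 196 :=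
  ⟨one_mem_quatOrder71, fun _ hx _ hy => mul_mem_quatOrder71 hx hy,
    fun _ hx => mem_one_iff_exists_intCast.1 (trd71_mem_one hx),
    fun _ hx => mem_one_iff_exists_intCast.1 (nrd71_mem_one hx), det_trd71_basis71_mul_star⟩
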